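/- For any central subgroup B of G contained in Z = [H,H] ∩ [K,K], the inflation homomorphism inf : H²(G/B, D) → H²(G, D) is surjective. -/

import Mathlib

/-!
Setting (central products): `G` is a group with normal subgroups `H` and `K` such that
`G = HK` (i.e. `H ⊔ K = ⊤`) and `[H, K] = 1` (i.e. every element of `H` commutes with
every element of `K`).  We set `A = H ⊓ K` and `Z = ⁅H,H⁆ ⊓ ⁅K,K⁆`; both are central
in `G`.  Coefficients are taken in a divisible abelian group `D`, regarded as a trivial
module.  Second cohomology `H2 X D` is realized concretely as (inhomogeneous)
2-cocycles modulo 2-coboundaries, and `Hom(X, D)` is realized as `Additive X →+ D`.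
-/

open scoped TensorProduct

set_option maxHeartbeats 1000000
set_option synthInstance.maxHeartbeats 1000000
set_option synthInstance.maxSize 2000

namespace SchurCP

variable (G : Type) [Group G] (D : Type) [AddCommGroup D]

/-- The group of 2-cocycles on `G` with values in the trivial module `D`. -/
def cocycles2 : AddSubgroup (G → G → D) where
  carrier := {f | ∀ g h k : G, f g h + f (g * h) k = f h k + f g (h * k)}
  zero_mem' := by intro g h k; simp
  add_mem' := by
    intro a b ha hb g h k
    simp only [Pi.add_apply]
    rw [add_add_add_comm, ha g h k, hb g h k, add_add_add_comm]
  neg_mem' := by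
    intro a ha g h k
    simp only [Pi.neg_apply]
    rw [← neg_add, ← neg_add, ha g h k]

/-- The group of 2-coboundaries on `G` with values in the trivial module `D`. -/
def coboundaries2 : AddSubgroup (G → G → D) where
  carrier := {f | ∃ φ : G → D, ∀ g h : G, f g h = φ g + φ h - φ (g * h)}
  zero_mem' := ⟨0, by simp⟩
  add_mem' := by
    rintro a b ⟨φ, hφ⟩ ⟨ψ, hψ⟩
    exact ⟨φ + ψ, fun g h => by simp only [Pi.add_apply, hφ g h, hψ g h]; abel⟩
  neg_mem' := by
    rintro a ⟨φ, hφ⟩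
    exact ⟨-φ, fun g h => by simp only [Pi.neg_apply, hφ g h]; abel⟩

/-- The second cohomology group `H²(G, D)` of `G` with coefficients in the
trivial module `D`. -/
def H2 : Type := cocycles2 G D ⧸ (coboundaries2 G D).addSubgroupOf (cocycles2 G D)

instance : AddCommGroup (H2 G D) :=
  QuotientAddGroup.Quotient.addCommGroup ((coboundaries2 G D).addSubgroupOf (cocycles2 G D))

variable {G D}

/-- The cohomology class of a 2-cocycle. -/
abbrev H2mk (f : cocycles2 G D) : H2 G D := QuotientAddGroup.mk f

/-- Pullback of a 2-cocycle along a group homomorphism. -/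
def pullCocycle {G' : Type} [Group G'] (π : G' →* G) :
    cocycles2 G D →+ cocycles2 G' D where
  toFun f := ⟨fun x y => (f : G → G → D) (π x) (π y), by
    intro x y z
    simpa only [map_mul] using f.2 (π x) (π y) (π z)⟩
  map_zero' := rfl
  map_add' _ _ := rfl

/-- The homomorphism `H²(G, D) → H²(G', D)` induced by a group homomorphism
`π : G' → G`; this specializes to restriction maps (for inclusions of subgroups)
and to inflation maps (for quotient maps). -/
def H2Map {G' : Type} [Group G'] (π : G' →* G) : H2 G D →+ H2 G' D :=
  QuotientAddGroup.map _ _ (pullCocycle π) (by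
    intro f hf
    rw [AddSubgroup.mem_addSubgroupOf] at hf
    rw [AddSubgroup.mem_comap, AddSubgroup.mem_addSubgroupOf]
    obtain ⟨φ, hφ⟩ := hf
    exact ⟨fun x => φ (π x), fun x y => by
      show (f : G → G → D) (π x) (π y) = _
      rw [hφ (π x) (π y), ← map_mul]⟩)

theorem commutator_le_self {X : Type} [Group X] (H : Subgroup X) : ⁅H, H⁆ ≤ H := by
  rw [Subgroup.commutator_le]
  intro g₁ h₁ g₂ h₂
  rw [commutatorElement_def]
  exact H.mul_mem (H.mul_mem (H.mul_mem h₁ h₂) (H.inv_mem h₁)) (H.inv_mem h₂)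

theorem inf_commutator_le_inf {X : Type} [Group X] (H K : Subgroup X) :
    ⁅H, H⁆ ⊓ ⁅K, K⁆ ≤ H ⊓ K :=
  inf_le_inf (commutator_le_self H) (commutator_le_self K)

theorem subgroupOf_le {X : Type} [Group X] {B C : Subgroup X} (h : B ≤ C)
    (J : Subgroup X) : B.subgroupOf J ≤ C.subgroupOf J := fun _x hx => h hx

/-- The natural projection `X/N → X/M` for `N ≤ M`. -/
def quotProj {X : Type} [Group X] {N M : Subgroup X} [N.Normal] [M.Normal] (h : N ≤ M) :
    (X ⧸ N) →* (X ⧸ M) :=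
  QuotientGroup.map N M (MonoidHom.id X) (by rwa [Subgroup.comap_id])

/-- The inflation homomorphism `H²(X/M, D) → H²(X/N, D)` for `N ≤ M`. -/
def inflMap {X : Type} [Group X] {N M : Subgroup X} [N.Normal] [M.Normal]
    (h : N ≤ M) (D : Type) [AddCommGroup D] : H2 (X ⧸ M) D →+ H2 (X ⧸ N) D :=
  H2Map (quotProj h)

/-- The natural homomorphism `H/(A ∩ H) → X/A` for subgroups `A, H` of `X`;
for `A ≤ H` this realizes `H/A` as a subgroup of `X/A`. -/
def quotInclusion {X : Type} [Group X] (H A : Subgroup X) [A.Normal]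
    [(A.subgroupOf H).Normal] : (↥H ⧸ A.subgroupOf H) →* X ⧸ A :=
  QuotientGroup.map (A.subgroupOf H) A H.subtype (fun _x hx => hx)

/-- The abelian tensor product `X ⊗ Y = X/[X,X] ⊗_ℤ Y/[Y,Y]` of two groups. -/
abbrev AbTensor (X Y : Type) [Group X] [Group Y] : Type :=
  TensorProduct ℤ (Additive (Abelianization X)) (Additive (Abelianization Y))

/-- The element `x[X,X] ⊗ y[Y,Y]` of the abelian tensor product. -/
noncomputable abbrev tmulAb {X Y : Type} [Group X] [Group Y] (x : X) (y : Y) :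
    AbTensor X Y :=
  Additive.ofMul (Abelianization.of x) ⊗ₜ[ℤ] Additive.ofMul (Abelianization.of y)

/-- The map on abelian tensor products induced by a pair of group homomorphisms. -/
noncomputable def abTensorMap {X Y X' Y' : Type} [Group X] [Group Y] [Group X'] [Group Y']
    (f : X →* X') (g : Y →* Y') : AbTensor X Y →ₗ[ℤ] AbTensor X' Y' :=
  TensorProduct.map (MonoidHom.toAdditive (Abelianization.map f)).toIntLinearMap
    (MonoidHom.toAdditive (Abelianization.map g)).toIntLinearMap

/-!
Normalize a 2-cocycle `f` on `G` and form the central extension `E = D ×_f G`. The preimages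
`H̃, K̃` of `H, K` in `E` commute modulo the central subgroup `D`, so by the three subgroups lemma
`⁅H̃, H̃⁆` centralizes `K̃` and `⁅K̃, K̃⁆` centralizes `H̃`; hence the preimage of
`⁅H, H⁆ ⊓ ⁅K, K⁆` is central in `E = H̃ K̃`, which for `b ∈ B` says `f b g = f g b`.
The restriction of `f` to the abelian group `B` is therefore symmetric, i.e. it describes an
abelian extension of `B` by `D`, which splits since `D` is divisible: `f|_B = δψ`. Extending `ψ`
along a transversal of `B` yields `φ` such that `f + δφ` is constant on cosets of `B`, and such a
cocycle is inflated from `G ⧸ B`.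
-/

section ThreeSubgroups

open Subgroup

variable {E G : Type} [Group E] [Group G] {π : E →* G}

theorem comap_commutator_le_centralizer_comap (hπ : Function.Surjective π)
    (hker : π.ker ≤ center E) {H K : Subgroup G} (hcomm : H ≤ centralizer K) :
    ⁅H, H⁆.comap π ≤ centralizer (K.comap π) := by
  set H' := H.comap π
  set K' := K.comap π
  have hH'K' : ⁅H', K'⁆ ≤ centralizer H' := by
    refine le_trans ?_ (hker.trans (center_le_centralizer _))
    rw [← MonoidHom.comap_bot, ← map_le_iff_le_comap, map_commutator, le_bot_iff,
      commutator_eq_bot_iff_le_centralizer]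
    exact (map_comap_le _ _).trans (hcomm.trans (centralizer_le (map_comap_le _ _)))
  have hH'H'K' : ⁅⁅H', H'⁆, K'⁆ = ⊥ :=
    commutator_commutator_eq_bot_of_rotate
      (commutator_eq_bot_iff_le_centralizer.mpr hH'K')
      (commutator_eq_bot_iff_le_centralizer.mpr (commutator_comm K' H' ▸ hH'K'))
  calc ⁅H, H⁆.comap π = ⁅H', H'⁆ ⊔ π.ker := by
        rw [← comap_map_eq, map_commutator, map_comap_eq_self_of_surjective hπ]
    _ ≤ centralizer K' :=
        sup_le (commutator_eq_bot_iff_le_centralizer.mp hH'H'K')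
          (hker.trans (center_le_centralizer _))

theorem comap_commutator_inf_le_center (hπ : Function.Surjective π)
    (hker : π.ker ≤ center E) {H K : Subgroup G} (hHK : H ⊔ K = ⊤)
    (hcomm : H ≤ centralizer K) :
    (⁅H, H⁆ ⊓ ⁅K, K⁆).comap π ≤ center E := by
  have hH := comap_commutator_le_centralizer_comap hπ hker hcomm
  have hK := comap_commutator_le_centralizer_comap hπ hker (le_centralizer_iff.mp hcomm)
  refine SetLike.coe_subset_coe.mp (centralizer_eq_top_iff_subset.mp ?_)
  rw [eq_top_iff, ← comap_top π, ← hHK, ← comap_sup_eq π H K hπ]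
  exact sup_le
    (le_centralizer_iff.mp (le_trans (comap_mono inf_le_right) hK))
    (le_centralizer_iff.mp (le_trans (comap_mono inf_le_left) hH))

end ThreeSubgroups

section Cocycles

variable {X D : Type} [Group X] [AddCommGroup D]

theorem coboundaries2_le_cocycles2 : coboundaries2 X D ≤ cocycles2 X D := by
  rintro f ⟨φ, hφ⟩ g h k
  simp only [hφ, mul_assoc]
  abel

def coboundary (φ : X → D) : X → X → D := fun g h => φ g + φ h - φ (g * h)

theorem coboundary_mem_coboundaries2 (φ : X → D) : coboundary φ ∈ coboundaries2 X D :=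
  ⟨φ, fun _ _ => rfl⟩

theorem H2mk_eq_H2mk_iff {f f' : cocycles2 X D} :
    H2mk f = H2mk f' ↔ (f' : X → X → D) - f ∈ coboundaries2 X D := by
  refine QuotientAddGroup.eq.trans ?_
  rw [AddSubgroup.mem_addSubgroupOf, AddSubgroup.coe_add, NegMemClass.coe_neg, neg_add_eq_sub]

theorem exists_normalized_rep (x : H2 X D) :
    ∃ f : cocycles2 X D, (f : X → X → D) 1 1 = 0 ∧ H2mk f = x := by
  induction x using QuotientAddGroup.induction_on with | H f => ?_
  have hconst : (fun _ _ => (f : X → X → D) 1 1) ∈ coboundaries2 X D :=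
    ⟨fun _ => (f : X → X → D) 1 1, fun _ _ => by abel⟩
  refine ⟨f - ⟨_, coboundaries2_le_cocycles2 hconst⟩, sub_self _, ?_⟩
  rw [H2mk_eq_H2mk_iff, AddSubgroup.coe_sub, sub_sub_cancel]
  exact hconst

variable {f : X → X → D}

theorem cocycle_one_left (hf : f ∈ cocycles2 X D) (h0 : f 1 1 = 0) (g : X) : f 1 g = 0 := by
  simpa [h0] using hf 1 1 g

theorem cocycle_one_right (hf : f ∈ cocycles2 X D) (h0 : f 1 1 = 0) (g : X) : f g 1 = 0 := by
  simpa [h0] using hf g 1 1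

theorem cocycle_apply_inv (hf : f ∈ cocycles2 X D) (h0 : f 1 1 = 0) (g : X) :
    f g g⁻¹ = f g⁻¹ g := by
  simpa [cocycle_one_left hf h0, cocycle_one_right hf h0] using hf g g⁻¹ g

end Cocycles

section CentralExtension

variable {X D : Type} [Group X] [AddCommGroup D] {f : X → X → D}

abbrev extGroup (hf : f ∈ cocycles2 X D) (h0 : f 1 1 = 0) : Group (D × X) :=
  letI : Mul (D × X) := ⟨fun p q => (p.1 + q.1 + f p.2 q.2, p.2 * q.2)⟩
  letI : One (D × X) := ⟨(0, 1)⟩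
  letI : Inv (D × X) := ⟨fun p => (-p.1 - f p.2 p.2⁻¹, p.2⁻¹)⟩
  Group.ofLeftAxioms
    (fun a b c => Prod.ext (by
      change a.1 + b.1 + f a.2 b.2 + c.1 + f (a.2 * b.2) c.2
        = a.1 + (b.1 + c.1 + f b.2 c.2) + f a.2 (b.2 * c.2)
      linear_combination (norm := module) hf a.2 b.2 c.2) (mul_assoc a.2 b.2 c.2))
    (fun a => Prod.ext (by
      change 0 + a.1 + f 1 a.2 = a.1
      rw [cocycle_one_left hf h0, add_zero, zero_add]) (one_mul a.2))
    (fun a => Prod.ext (by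
      change -a.1 - f a.2 a.2⁻¹ + a.1 + f a.2⁻¹ a.2 = 0
      rw [cocycle_apply_inv hf h0]
      abel) (inv_mul_cancel a.2))

open Subgroup in
theorem cocycle_comm_of_mem_commutator_inf {H K : Subgroup X} (hHK : H ⊔ K = ⊤)
    (hcomm : H ≤ centralizer K) (hf : f ∈ cocycles2 X D) (h0 : f 1 1 = 0) {b : X}
    (hb : b ∈ ⁅H, H⁆ ⊓ ⁅K, K⁆) (g : X) :
    f b g = f g b := by
  let _ := extGroup hf h0
  let π : D × X →* X := { toFun := Prod.snd, map_one' := rfl, map_mul' := fun _ _ => rfl }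
  have hπ : Function.Surjective π := fun g => ⟨(0, g), rfl⟩
  have hker : π.ker ≤ center (D × X) := fun p (hp : p.2 = 1) =>
    mem_center_iff.mpr fun q => Prod.ext
      (by
        change q.1 + p.1 + f q.2 p.2 = p.1 + q.1 + f p.2 q.2
        rw [hp, cocycle_one_left hf h0, cocycle_one_right hf h0, add_comm q.1])
      (by
        change q.2 * p.2 = p.2 * q.2
        rw [hp, one_mul, mul_one])
  have hcentral := comap_commutator_inf_le_center hπ hker hHK hcomm (x := (0, b)) hb
  have hfst := congrArg Prod.fst (mem_center_iff.mp hcentral (0, g))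
  change 0 + 0 + f g b = 0 + 0 + f b g at hfst
  simpa using hfst.symm

theorem mem_coboundaries2_of_symm [IsMulCommutative X] [DivisibleBy D ℤ]
    (hf : f ∈ cocycles2 X D) (h0 : f 1 1 = 0) (hsymm : ∀ a b, f a b = f b a) :
    f ∈ coboundaries2 X D := by
  let _ : CommGroup (D × X) :=
    { extGroup hf h0 with
      mul_comm := fun p q => Prod.ext
        (by
          change p.1 + q.1 + f p.2 q.2 = q.1 + p.1 + f q.2 p.2
          rw [hsymm, add_comm p.1])
        (mul_comm' p.2 q.2) }
  let ι : D →+ Additive (D × X) :=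
    { toFun := fun d => Additive.ofMul (d, 1)
      map_zero' := rfl
      map_add' := fun d e => congrArg Additive.ofMul (Prod.ext
        (by change d + e = d + e + f 1 1; rw [h0, add_zero]) (mul_one 1).symm) }
  have hι : Function.Injective ι := fun d e h => congrArg (fun p => (Additive.toMul p).1) h
  obtain ⟨r, hr⟩ := (Module.Baer.of_divisible D).extension_property_addMonoidHom ι hι (.id D)
  refine ⟨fun b => r (Additive.ofMul (0, b)), fun a b => ?_⟩
  have hprod : ((0, a) : D × X) * (0, b) = (f a b, 1) * (0, a * b) := Prod.ext
    (by change 0 + 0 + f a b = f a b + 0 + f 1 (a * b); rw [cocycle_one_left hf h0]; abel)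
    (one_mul (a * b)).symm
  have hsplit := congrArg (fun p => r (Additive.ofMul p)) hprod
  simp only [ofMul_mul, map_add] at hsplit
  have hrι : r (Additive.ofMul (f a b, 1)) = f a b := DFunLike.congr_fun hr (f a b)
  change _ = r (Additive.ofMul (0, a)) + r (Additive.ofMul (0, b)) - _
  rw [hsplit, hrι, add_sub_cancel_right]

end CentralExtension

section Descent

variable {G D : Type} [Group G] [AddCommGroup D]

def IsConstOnCosets (B : Subgroup G) (f : G → G → D) : Prop :=
  ∀ g h : G, ∀ b ∈ B, f (g * b) h = f g h ∧ f g (h * b) = f g h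

theorem exists_H2Map_mk'_eq_of_isConstOnCosets {B : Subgroup G} [B.Normal]
    (f : cocycles2 G D) (hf : IsConstOnCosets B (f : G → G → D)) :
    ∃ y, H2Map (QuotientGroup.mk' B) y = H2mk f := by
  have hout : ∀ g h : G,
      (f : G → G → D) (g : G ⧸ B).out (h : G ⧸ B).out = (f : G → G → D) g h := by
    intro g h
    obtain ⟨b, hb⟩ := QuotientGroup.mk_out_eq_mul B g
    obtain ⟨c, hc⟩ := QuotientGroup.mk_out_eq_mul B h
    rw [hb, hc, (hf _ _ _ b.2).1, (hf _ _ _ c.2).2]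
  let F : G ⧸ B → G ⧸ B → D := fun x y => (f : G → G → D) x.out y.out
  have hF : F ∈ cocycles2 (G ⧸ B) D := by
    intro x y z
    induction x using QuotientGroup.induction_on with | H g => ?_
    induction y using QuotientGroup.induction_on with | H h => ?_
    induction z using QuotientGroup.induction_on with | H k => ?_
    simp only [F, ← QuotientGroup.mk_mul, hout]
    exact f.2 g h k
  exact ⟨H2mk ⟨F, hF⟩, congrArg H2mk (Subtype.ext (funext₂ hout))⟩

theorem exists_shift_of_mem_coboundaries2 (B : Subgroup G) {f : G → G → D}
    (hf : f ∈ cocycles2 G D) {ψ : B → D} (hψ : ∀ a b : B, f a b = ψ a + ψ b - ψ (a * b)) :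
    ∃ φ : G → D, ∀ (g : G) (b : B), φ (g * b) = φ g - ψ b + f g b := by
  let t : G → G := fun g => (g : G ⧸ B).out
  let β : G → B := fun g =>
    ⟨(t g)⁻¹ * g, QuotientGroup.eq.mp (QuotientGroup.out_eq' (g : G ⧸ B))⟩
  refine ⟨fun g => f (t g) (β g) - ψ (β g), fun g b => ?_⟩
  have ht : t (g * b) = t g := congrArg Quotient.out (QuotientGroup.mk_mul_of_mem g b.2)
  have hβ : β (g * b) = β g * b := Subtype.ext (by simp only [β, ht, Subgroup.coe_mul, mul_assoc])
  have htβ : t g * β g = g := mul_inv_cancel_left _ _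
  have hcocycle := hf (t g) (β g) b
  rw [htβ] at hcocycle
  simp only [ht, hβ]
  linear_combination (norm := module) -hψ (β g) b - hcocycle

theorem isConstOnCosets_add_coboundary {B : Subgroup G} (hB : B ≤ Subgroup.center G)
    {f : G → G → D} (hf : f ∈ cocycles2 G D) (hsymm : ∀ b ∈ B, ∀ g, f b g = f g b)
    {ψ : B → D} {φ : G → D} (hφ : ∀ (g : G) (b : B), φ (g * b) = φ g - ψ b + f g b) :
    IsConstOnCosets B (f + coboundary φ) := by
  intro g h b hb
  have hbh : b * h = h * b := (Subgroup.mem_center_iff.mp (hB hb) h).symm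
  have hgh := hf g h b
  have hgb := hf g b h
  rw [hbh, hsymm b hb h] at hgb
  simp only [Pi.add_apply, coboundary]
  constructor
  · rw [mul_assoc, hbh, ← mul_assoc, hφ g ⟨b, hb⟩, hφ (g * h) ⟨b, hb⟩]
    linear_combination (norm := module) hgb - hgh
  · rw [← mul_assoc, hφ h ⟨b, hb⟩, hφ (g * h) ⟨b, hb⟩]
    linear_combination (norm := module) -hgh

end Descent

theorem inflation_surjective_general {G : Type} [Group G] (H K : Subgroup G)
    (hprod : H ⊔ K = ⊤) (hcomm : ∀ h ∈ H, ∀ k ∈ K, Commute h k)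
    (D : Type) [AddCommGroup D] [DivisibleBy D ℤ]
    (B : Subgroup G) [B.Normal] (hB : B ≤ ⁅H, H⁆ ⊓ ⁅K, K⁆) :
    Function.Surjective (H2Map (QuotientGroup.mk' B) : H2 (G ⧸ B) D →+ H2 G D) := by
  have hHK : H ≤ Subgroup.centralizer K := fun h hh k hk => (hcomm h hh k hk).eq.symm
  have hBcenter : B ≤ Subgroup.center G := by
    have := comap_commutator_inf_le_center (π := MonoidHom.id G) Function.surjective_id
      (by rw [MonoidHom.ker_id]; exact bot_le) hprod hHK
    rw [Subgroup.comap_id] at this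
    exact hB.trans this
  have : IsMulCommutative B :=
    Subgroup.le_centralizer_iff_isMulCommutative.mp
      (hBcenter.trans (Subgroup.center_le_centralizer _))
  intro x
  obtain ⟨f, h0, rfl⟩ := exists_normalized_rep x
  have hsymm : ∀ b ∈ B, ∀ g, (f : G → G → D) b g = (f : G → G → D) g b := fun b hb =>
    cocycle_comm_of_mem_commutator_inf hprod hHK f.2 h0 (hB hb)
  obtain ⟨ψ, hψ⟩ := mem_coboundaries2_of_symm (f := fun a b : B => (f : G → G → D) a b)
    (fun a b c => f.2 a b c) h0 (fun a b => hsymm a a.2 b)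
  obtain ⟨φ, hφ⟩ := exists_shift_of_mem_coboundaries2 B f.2 hψ
  have hδφ := coboundary_mem_coboundaries2 φ
  obtain ⟨y, hy⟩ := exists_H2Map_mk'_eq_of_isConstOnCosets
    ⟨_, add_mem f.2 (coboundaries2_le_cocycles2 hδφ)⟩
    (isConstOnCosets_add_coboundary hBcenter f.2 hsymm hφ)
  refine ⟨y, hy.trans (H2mk_eq_H2mk_iff.mpr ?_)⟩
  simpa using neg_mem hδφ

/-- For any central subgroup `B ≤ Z = ⁅H,H⁆ ⊓ ⁅K,K⁆` of the central product `G`,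
the inflation homomorphism `H²(G/B, D) → H²(G, D)` is surjective. -/
theorem inflation_surjective {G : Type} [Group G] (H K : Subgroup G) [H.Normal] [K.Normal]
    (hprod : H ⊔ K = ⊤) (hcomm : ∀ h ∈ H, ∀ k ∈ K, Commute h k)
    (D : Type) [AddCommGroup D] [DivisibleBy D ℤ]
    (B : Subgroup G) [B.Normal] (hB : B ≤ ⁅H, H⁆ ⊓ ⁅K, K⁆) :
    Function.Surjective (H2Map (QuotientGroup.mk' B) : H2 (G ⧸ B) D →+ H2 G D) :=
  inflation_surjective_general H K hprod hcomm D B hB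

end SchurCP
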